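/- (Freshness of transaction sequence numbers, formal content of Lemma 1.) In the Byzcuit object transition system, suppose a transaction with transaction sequence number sT is aborted at the object, i.e., the execution contains the step Step (Locked T sT) (abort T sT) (Active (sT + 1)). Then every lock step occurring later in the execution carries a strictly larger sequence number: if Active (sT + 1) →* Active s'' and Step (Active s'') (lock T' sT') (Locked T' sT'), then sT' ≥ sT + 1 > sT. Consequently, a pre-recorded message whose sequence number is at most sT can never again pass the freshness check required to lock the object. -/

import Mathlib

/-- States of the life cycle of a single Byzcuit object. -/
inductive ObjState : Type where
  | Active : ℕ → ObjState
  | Locked : ℕ → ℕ → ObjState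
  | Inactive : ℕ → ObjState
deriving DecidableEq

/-- Labels of the transitions: lock, commit and abort, each carrying a
transaction `T` and a transaction sequence number `sT`. -/
inductive Label : Type where
  | lock : ℕ → ℕ → Label
  | commit : ℕ → ℕ → Label
  | abort : ℕ → ℕ → Label
deriving DecidableEq

/-- The step relation of the Byzcuit object transition system, generated by
exactly three rules. -/
inductive Step : ObjState → Label → ObjState → Prop where
  | lock {s T sT : ℕ} (h : sT ≥ s) :
      Step (.Active s) (.lock T sT) (.Locked T sT)
  | commit {T sT : ℕ} :
      Step (.Locked T sT) (.commit T sT) (.Inactive T)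
  | abort {T sT : ℕ} :
      Step (.Locked T sT) (.abort T sT) (.Active (sT + 1))

/-- Reachability by zero or more steps (labels existentially quantified). -/
inductive Reach : ObjState → ObjState → Prop where
  | refl (σ : ObjState) : Reach σ σ
  | tail {σ σ' σ'' : ObjState} (h : Reach σ σ') (ℓ : Label)
      (hs : Step σ' ℓ σ'') : Reach σ σ''

/-- The abort rule restarts the object at `sT + 1`, never below the sequence number it was
locked with, so a lower bound on sequence numbers survives every step. -/
def ObjState.SeqGe (n : ℕ) : ObjState → Prop
  | .Active s => n ≤ s
  | .Locked _ sT => n ≤ sT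
  | .Inactive _ => True

theorem Step.seqGe {n : ℕ} {σ σ' : ObjState} {ℓ : Label} (h : Step σ ℓ σ') (hσ : σ.SeqGe n) :
    σ'.SeqGe n := by
  cases h with
  | lock hle => exact le_trans (α := ℕ) hσ hle
  | commit => trivial
  | abort => exact Nat.le_succ_of_le hσ

theorem Reach.seqGe {n : ℕ} {σ σ' : ObjState} (h : Reach σ σ') (hσ : σ.SeqGe n) :
    σ'.SeqGe n := by
  induction h with
  | refl => exact hσ
  | tail _ _ hs ih => exact hs.seqGe ih

theorem Reach.le_of_active {n s : ℕ} (h : Reach (.Active n) (.Active s)) : n ≤ s :=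
  h.seqGe (n := n) le_rfl

theorem fresh_seq_after_abort_general (sT : ℕ) :
    ∀ (s'' T' sT' : ℕ),
      Reach (.Active (sT + 1)) (.Active s'') →
      Step (.Active s'') (.lock T' sT') (.Locked T' sT') →
      sT' ≥ sT + 1 ∧ sT + 1 > sT := by
  intro s'' T' sT' hreach hlock
  cases hlock with
  | lock hle => exact ⟨hreach.le_of_active.trans hle, Nat.lt_succ_self sT⟩

/-- **Freshness of transaction sequence numbers (Lemma 1).** If the execution
contains the abort step of a transaction with sequence number `sT`, then every
lock step occurring later carries a strictly larger sequence number: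
`sT' ≥ sT + 1 > sT`. -/
theorem fresh_seq_after_abort (T sT : ℕ)
    (habort : Step (.Locked T sT) (.abort T sT) (.Active (sT + 1))) :
    ∀ (s'' T' sT' : ℕ),
      Reach (.Active (sT + 1)) (.Active s'') →
      Step (.Active s'') (.lock T' sT') (.Locked T' sT') →
      sT' ≥ sT + 1 ∧ sT + 1 > sT :=
  fresh_seq_after_abort_general sT
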